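/- arXiv:0708.1047 — 8 statements merged into one kernel-verified Lean document; each statement's English description precedes it below -/
import Mathlib

section
/- Fix real constants b, c, κ, e, a sign ε ∈ {1, −1}, and a real constant m. If φ is a real function of one real variable that is twice differentiable at a point τ ∈ ℝ and satisfies at τ both (E1): τ²(τ−c)²φ″ + (τ−c)[mτ² − (τ−c)(2(m−1)τ − b)]φ′ − mτ²φ = −εκτ²/2, and (E2): −τ³(τ−c)φ″ + [(2mτ−b)τ(τ−c) − (m+1)τ³]φ′ + [2(2m−1)τ² − bτ + 2(τ−c)(b − (2m−1)τ)]φ = eτ, then at τ it also satisfies the first-order equation (E3): τ²(τ−c)(τ−2c)φ′ + [−mτ³ + (2(2m−1)c+b)τ² − (2(2m−1)c²+3bc)τ + 2bc²]φ = −εκτ³/2 + eτ(τ−c). -/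
/-- (E1) and (E2) at a point imply the first-order equation (E3) there. -/
theorem stmt_3 (b c κ e ε m : ℝ) (hε : ε = 1 ∨ ε = -1)
    (φ : ℝ → ℝ) (τ : ℝ)
    (hφ : DifferentiableAt ℝ φ τ)
    (hφ' : DifferentiableAt ℝ (deriv φ) τ)
    (hE1 : τ^2 * (τ-c)^2 * deriv (deriv φ) τ
        + (τ-c) * (m*τ^2 - (τ-c)*(2*(m-1)*τ - b)) * deriv φ τ
        - m*τ^2 * φ τ = -ε*κ*τ^2/2)
    (hE2 : -τ^3*(τ-c) * deriv (deriv φ) τ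
        + ((2*m*τ - b)*τ*(τ-c) - (m+1)*τ^3) * deriv φ τ
        + (2*(2*m-1)*τ^2 - b*τ + 2*(τ-c)*(b - (2*m-1)*τ)) * φ τ = e*τ) :
    τ^2*(τ-c)*(τ-2*c) * deriv φ τ
      + (-m*τ^3 + (2*(2*m-1)*c + b)*τ^2 - (2*(2*m-1)*c^2 + 3*b*c)*τ + 2*b*c^2) * φ τ
      = -ε*κ*τ^3/2 + e*τ*(τ-c) := by
  linear_combination τ*hE1 + (τ-c)*hE2
end

section
/- For any nonempty open interval I ⊆ ℝ and any function φ : I → ℝ that is twice differentiable on I, φ satisfies both (E1) and (E2) at every point of I if and only if φ satisfies both (E1) and (E3) at every point of I. -/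
/-!
Write `Rᵢ` for the residual (left side minus right side) of `(Eᵢ)`. Identically in `τ`,
`R₃ = τ R₁ + (τ - c) R₂`, so `{(E1),(E2)}` gives `(E3)`, and `{(E1),(E3)}` gives `(E2)` away
from `τ = c`. At `τ = c` we differentiate rather than pass to a limit (a limit would need `φ''`
continuous): `R₃` vanishes near `c`, and since the coefficient `τ²(τ-c)(τ-2c)` of `φ'` vanishes
at `c`, the `φ''` term drops out of `R₃'(c)`, leaving `R₃'(c) = R₂(c) + 3 R₁(c)`.
-/

open Filter Topology

section Residuals

variable (b c κ e ε m : ℝ) (φ : ℝ → ℝ)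

noncomputable def residualE1 (τ : ℝ) : ℝ :=
  (τ^2 * (τ-c)^2 * deriv (deriv φ) τ
      + (τ-c) * (m*τ^2 - (τ-c)*(2*(m-1)*τ - b)) * deriv φ τ
      - m*τ^2 * φ τ) - (-ε*κ*τ^2/2)

noncomputable def residualE2 (τ : ℝ) : ℝ :=
  (-τ^3*(τ-c) * deriv (deriv φ) τ
      + ((2*m*τ - b)*τ*(τ-c) - (m+1)*τ^3) * deriv φ τ
      + (2*(2*m-1)*τ^2 - b*τ + 2*(τ-c)*(b - (2*m-1)*τ)) * φ τ) - e*τ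

noncomputable def residualE3 (τ : ℝ) : ℝ :=
  (τ^2*(τ-c)*(τ-2*c) * deriv φ τ
      + (-m*τ^3 + (2*(2*m-1)*c + b)*τ^2 - (2*(2*m-1)*c^2 + 3*b*c)*τ + 2*b*c^2) * φ τ)
    - (-ε*κ*τ^3/2 + e*τ*(τ-c))

theorem residualE3_eq (τ : ℝ) :
    residualE3 b c κ e ε m φ τ
      = τ * residualE1 b c κ ε m φ τ + (τ - c) * residualE2 b c e m φ τ := by
  unfold residualE1 residualE2 residualE3
  ring

theorem hasDerivAt_residualE3_self (hφ : DifferentiableAt ℝ φ c)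
    (hφ' : DifferentiableAt ℝ (deriv φ) c) :
    HasDerivAt (residualE3 b c κ e ε m φ)
      (residualE2 b c e m φ c + 3 * residualE1 b c κ ε m φ c) c := by
  have hA := ((hasDerivAt_pow 2 c).mul ((hasDerivAt_id c).sub_const c)).mul
    ((hasDerivAt_id c).sub_const (2*c))
  have hP := ((((hasDerivAt_pow 3 c).const_mul (-m)).add
    ((hasDerivAt_pow 2 c).const_mul (2*(2*m-1)*c + b))).sub
    ((hasDerivAt_id c).const_mul (2*(2*m-1)*c^2 + 3*b*c))).add_const (2*b*c^2)
  have hR := (((hasDerivAt_pow 3 c).const_mul (-ε*κ)).div_const 2).add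
    (((hasDerivAt_id c).const_mul e).mul ((hasDerivAt_id c).sub_const c))
  refine (((hA.mul hφ'.hasDerivAt).add (hP.mul hφ.hasDerivAt)).sub hR).congr_deriv ?_
  simp only [residualE1, residualE2, Pi.mul_apply, Pi.add_apply, Pi.sub_apply, id_eq,
    Nat.cast_ofNat]
  ring

theorem residualE2_eq_zero_of_eventually {τ : ℝ} (hφ : DifferentiableAt ℝ φ τ)
    (hφ' : DifferentiableAt ℝ (deriv φ) τ) (h₁ : residualE1 b c κ ε m φ τ = 0)
    (h₃ : ∀ᶠ x in 𝓝 τ, residualE3 b c κ e ε m φ x = 0) :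
    residualE2 b c e m φ τ = 0 := by
  by_cases hτc : τ = c
  · subst hτc
    have hderiv := (hasDerivAt_residualE3_self b τ κ e ε m φ hφ hφ').unique
      ((hasDerivAt_const τ 0).congr_of_eventuallyEq h₃)
    linear_combination hderiv - 3 * h₁
  · have h := h₃.self_of_nhds
    rw [residualE3_eq, h₁, mul_zero, zero_add] at h
    exact (mul_eq_zero.mp h).resolve_left (sub_ne_zero.mpr hτc)

end Residuals

theorem stmt_4_general (b c κ e ε : ℝ)
    (m : ℤ)
    (I : Set ℝ) (hIopen : IsOpen I)
    (φ : ℝ → ℝ)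
    (hφ : ∀ τ ∈ I, DifferentiableAt ℝ φ τ)
    (hφ' : ∀ τ ∈ I, DifferentiableAt ℝ (deriv φ) τ) :
    (∀ τ ∈ I,
      (τ^2 * (τ-c)^2 * deriv (deriv φ) τ
          + (τ-c) * ((m:ℝ)*τ^2 - (τ-c)*(2*((m:ℝ)-1)*τ - b)) * deriv φ τ
          - (m:ℝ)*τ^2 * φ τ = -ε*κ*τ^2/2) ∧
      (-τ^3*(τ-c) * deriv (deriv φ) τ
          + ((2*(m:ℝ)*τ - b)*τ*(τ-c) - ((m:ℝ)+1)*τ^3) * deriv φ τ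
          + (2*(2*(m:ℝ)-1)*τ^2 - b*τ + 2*(τ-c)*(b - (2*(m:ℝ)-1)*τ)) * φ τ = e*τ))
    ↔
    (∀ τ ∈ I,
      (τ^2 * (τ-c)^2 * deriv (deriv φ) τ
          + (τ-c) * ((m:ℝ)*τ^2 - (τ-c)*(2*((m:ℝ)-1)*τ - b)) * deriv φ τ
          - (m:ℝ)*τ^2 * φ τ = -ε*κ*τ^2/2) ∧
      (τ^2*(τ-c)*(τ-2*c) * deriv φ τ
          + (-(m:ℝ)*τ^3 + (2*(2*(m:ℝ)-1)*c + b)*τ^2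
              - (2*(2*(m:ℝ)-1)*c^2 + 3*b*c)*τ + 2*b*c^2) * φ τ
          = -ε*κ*τ^3/2 + e*τ*(τ-c))) := by
  have key : (∀ τ ∈ I, residualE1 b c κ ε m φ τ = 0 ∧ residualE2 b c e m φ τ = 0) ↔
      (∀ τ ∈ I, residualE1 b c κ ε m φ τ = 0 ∧ residualE3 b c κ e ε m φ τ = 0) := by
    refine ⟨fun h τ hτ => ?_, fun h τ hτ => ?_⟩
    · obtain ⟨h₁, h₂⟩ := h τ hτ
      exact ⟨h₁, by rw [residualE3_eq, h₁, h₂, mul_zero, mul_zero, add_zero]⟩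
    · have h₃ : ∀ᶠ x in 𝓝 τ, residualE3 b c κ e ε m φ x = 0 :=
        eventually_of_mem (hIopen.mem_nhds hτ) fun x hx => (h x hx).2
      exact ⟨(h τ hτ).1,
        residualE2_eq_zero_of_eventually b c κ e ε m φ (hφ τ hτ) (hφ' τ hτ) (h τ hτ).1 h₃⟩
  simpa only [residualE1, residualE2, residualE3, sub_eq_zero] using key

/-- On any nonempty open interval, the systems {(E1),(E2)} and
{(E1),(E3)} have identical solution sets. -/
theorem stmt_4 (b c κ e ε : ℝ) (hε : ε = 1 ∨ ε = -1)
    (m : ℤ) (hm : 2 ≤ m)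
    (I : Set ℝ) (hIopen : IsOpen I) (hIne : I.Nonempty) (hIconn : I.OrdConnected)
    (φ : ℝ → ℝ)
    (hφ : ∀ τ ∈ I, DifferentiableAt ℝ φ τ)
    (hφ' : ∀ τ ∈ I, DifferentiableAt ℝ (deriv φ) τ) :
    (∀ τ ∈ I,
      (τ^2 * (τ-c)^2 * deriv (deriv φ) τ
          + (τ-c) * ((m:ℝ)*τ^2 - (τ-c)*(2*((m:ℝ)-1)*τ - b)) * deriv φ τ
          - (m:ℝ)*τ^2 * φ τ = -ε*κ*τ^2/2) ∧
      (-τ^3*(τ-c) * deriv (deriv φ) τ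
          + ((2*(m:ℝ)*τ - b)*τ*(τ-c) - ((m:ℝ)+1)*τ^3) * deriv φ τ
          + (2*(2*(m:ℝ)-1)*τ^2 - b*τ + 2*(τ-c)*(b - (2*(m:ℝ)-1)*τ)) * φ τ = e*τ))
    ↔
    (∀ τ ∈ I,
      (τ^2 * (τ-c)^2 * deriv (deriv φ) τ
          + (τ-c) * ((m:ℝ)*τ^2 - (τ-c)*(2*((m:ℝ)-1)*τ - b)) * deriv φ τ
          - (m:ℝ)*τ^2 * φ τ = -ε*κ*τ^2/2) ∧
      (τ^2*(τ-c)*(τ-2*c) * deriv φ τ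
          + (-(m:ℝ)*τ^3 + (2*(2*(m:ℝ)-1)*c + b)*τ^2
              - (2*(2*(m:ℝ)-1)*c^2 + 3*b*c)*τ + 2*b*c^2) * φ τ
          = -ε*κ*τ^3/2 + e*τ*(τ-c))) :=
  stmt_4_general b c κ e ε m I hIopen φ hφ hφ'
end

section
/- Fix real constants m, b, c, κ, e and ε ∈ {1, −1}. Define, for τ ∉ {0, c, 2c}, the rational functions p(τ) = [−mτ³ + (2(2m−1)c+b)τ² − (2(2m−1)c²+3bc)τ + 2bc²] / [τ²(τ−c)(τ−2c)], q(τ) = [−εκτ³/2 + eτ(τ−c)] / [τ²(τ−c)(τ−2c)], A(τ) = τ²(τ−c)², B(τ) = (τ−c)[mτ² − (τ−c)(2(m−1)τ − b)], and D(τ) = −εκτ²/2. Then the identity D − A·(q′ − p·q) − B·q = 0 holds at every real τ with τ ∉ {0, c, 2c}, where q′ denotes the derivative of q. -/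
lemma hasDerivAt_cubic_div_two_add (a e c τ : ℝ) :
    HasDerivAt (fun t => a * t ^ 3 / 2 + e * t * (t - c)) (3 * a * τ ^ 2 / 2 + e * (2 * τ - c)) τ := by
  have h := (((hasDerivAt_pow 3 τ).const_mul a).div_const 2).add
    (((hasDerivAt_id τ).const_mul e).mul ((hasDerivAt_id τ).sub_const c))
  exact h.congr_deriv (by norm_num; ring)

lemma hasDerivAt_sq_mul_sub_mul_sub (c τ : ℝ) :
    HasDerivAt (fun t => t ^ 2 * (t - c) * (t - 2 * c))
      (2 * τ * (τ - c) * (τ - 2 * c) + τ ^ 2 * (2 * τ - 3 * c)) τ := by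
  have h := ((hasDerivAt_pow 2 τ).mul ((hasDerivAt_id τ).sub_const c)).mul
    ((hasDerivAt_id τ).sub_const (2 * c))
  exact h.congr_deriv (by norm_num; ring)

theorem stmt_7_general (m b c κ e ε : ℝ)
    (p q A B D : ℝ → ℝ)
    (hpdef : ∀ τ, p τ =
      (-m*τ^3 + (2*(2*m-1)*c + b)*τ^2 - (2*(2*m-1)*c^2 + 3*b*c)*τ + 2*b*c^2)
        / (τ^2*(τ-c)*(τ-2*c)))
    (hqdef : ∀ τ, q τ = (-ε*κ*τ^3/2 + e*τ*(τ-c)) / (τ^2*(τ-c)*(τ-2*c)))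
    (hAdef : ∀ τ, A τ = τ^2*(τ-c)^2)
    (hBdef : ∀ τ, B τ = (τ-c) * (m*τ^2 - (τ-c)*(2*(m-1)*τ - b)))
    (hDdef : ∀ τ, D τ = -ε*κ*τ^2/2) :
    ∀ τ : ℝ, τ ≠ 0 → τ ≠ c → τ ≠ 2*c →
      D τ - A τ * (deriv q τ - p τ * q τ) - B τ * q τ = 0 := by
  intro τ h0 hc h2c
  have hden : τ^2*(τ-c)*(τ-2*c) ≠ 0 := by
    simp [h0, sub_ne_zero.2 hc, sub_ne_zero.2 h2c]
  have hq := ((hasDerivAt_cubic_div_two_add (-ε*κ) e c τ).div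
    (hasDerivAt_sq_mul_sub_mul_sub c τ) hden).congr_of_eventuallyEq (.of_forall hqdef)
  rw [hq.deriv, hqdef, hpdef, hAdef, hBdef, hDdef]
  field_simp
  ring

/-- The identity `D − A·(q′ − p·q) − B·q = 0` away from `{0, c, 2c}`. -/
theorem stmt_7 (m b c κ e ε : ℝ) (hε : ε = 1 ∨ ε = -1)
    (p q A B D : ℝ → ℝ)
    (hpdef : ∀ τ, p τ =
      (-m*τ^3 + (2*(2*m-1)*c + b)*τ^2 - (2*(2*m-1)*c^2 + 3*b*c)*τ + 2*b*c^2)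
        / (τ^2*(τ-c)*(τ-2*c)))
    (hqdef : ∀ τ, q τ = (-ε*κ*τ^3/2 + e*τ*(τ-c)) / (τ^2*(τ-c)*(τ-2*c)))
    (hAdef : ∀ τ, A τ = τ^2*(τ-c)^2)
    (hBdef : ∀ τ, B τ = (τ-c) * (m*τ^2 - (τ-c)*(2*(m-1)*τ - b)))
    (hDdef : ∀ τ, D τ = -ε*κ*τ^2/2) :
    ∀ τ : ℝ, τ ≠ 0 → τ ≠ c → τ ≠ 2*c →
      D τ - A τ * (deriv q τ - p τ * q τ) - B τ * q τ = 0 :=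
  stmt_7_general m b c κ e ε p q A B D hpdef hqdef hAdef hBdef hDdef
end

section
/- Fix real constants m, b, c. Define, for τ ∉ {0, c, 2c}, p(τ) = [−mτ³ + (2(2m−1)c+b)τ² − (2(2m−1)c²+3bc)τ + 2bc²] / [τ²(τ−c)(τ−2c)], A(τ) = τ²(τ−c)², B(τ) = (τ−c)[mτ² − (τ−c)(2(m−1)τ − b)], and C(τ) = −mτ². Then the identity A·(p² − p′) − B·p + C = −2bc(τ−c)² / (τ(τ−2c)) holds at every real τ with τ ∉ {0, c, 2c}, where p′ denotes the derivative of p. -/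
/-!
Write `p = N / D` with `N` the cubic numerator and `D = τ²(τ−c)(τ−2c)`. By the quotient rule,
`D² · (A(p² − p′) − Bp + C) = A(N² − N′D + ND′) − BND + CD²`, and this polynomial factors as
`−2bc τ³(τ−c)⁴(τ−2c)`; dividing by `D² = τ⁴(τ−c)²(τ−2c)²` gives the claim.
-/

theorem riccati_div_eq {N D : ℝ → ℝ} {N' D' τ : ℝ} (hN : HasDerivAt N N' τ)
    (hD : HasDerivAt D D' τ) (hD0 : D τ ≠ 0) (a β γ : ℝ) :
    a * ((N / D) τ ^ 2 - deriv (N / D) τ) - β * (N / D) τ + γ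
      = (a * (N τ ^ 2 - N' * D τ + N τ * D') - β * N τ * D τ + γ * D τ ^ 2) / D τ ^ 2 := by
  rw [(hN.div hD hD0).deriv, Pi.div_apply]
  field_simp
  ring

section

variable (m b c : ℝ)

def ratioNum (τ : ℝ) : ℝ :=
  -m*τ^3 + (2*(2*m-1)*c + b)*τ^2 - (2*(2*m-1)*c^2 + 3*b*c)*τ + 2*b*c^2

def ratioDen (τ : ℝ) : ℝ := τ^2*(τ-c)*(τ-2*c)

theorem hasDerivAt_ratioNum (τ : ℝ) :
    HasDerivAt (ratioNum m b c)
      (-3*m*τ^2 + 2*(2*(2*m-1)*c + b)*τ - (2*(2*m-1)*c^2 + 3*b*c)) τ := by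
  have h := ((((hasDerivAt_pow 3 τ).const_mul (-m)).add
      ((hasDerivAt_pow 2 τ).const_mul (2*(2*m-1)*c + b))).sub
      ((hasDerivAt_id τ).const_mul (2*(2*m-1)*c^2 + 3*b*c))).add_const (2*b*c^2)
  exact h.congr_deriv (by push_cast; ring)

theorem hasDerivAt_ratioDen (τ : ℝ) :
    HasDerivAt (ratioDen c) (2*τ*(τ-c)*(τ-2*c) + τ^2*(τ-2*c) + τ^2*(τ-c)) τ := by
  have h := ((hasDerivAt_pow 2 τ).mul ((hasDerivAt_id τ).sub_const c)).mul
      ((hasDerivAt_id τ).sub_const (2*c))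
  exact h.congr_deriv (by simp only [id_eq, Pi.mul_apply]; push_cast; ring)

theorem ratioDen_ne_zero {τ : ℝ} (h0 : τ ≠ 0) (hc : τ ≠ c) (h2c : τ ≠ 2*c) :
    ratioDen c τ ≠ 0 := by
  have h1 : τ - c ≠ 0 := sub_ne_zero.mpr hc
  have h2 : τ - 2*c ≠ 0 := sub_ne_zero.mpr h2c
  unfold ratioDen
  positivity

theorem riccati_numerator_factor (τ : ℝ) :
    τ^2*(τ-c)^2 * (ratioNum m b c τ ^ 2
        - (-3*m*τ^2 + 2*(2*(2*m-1)*c + b)*τ - (2*(2*m-1)*c^2 + 3*b*c)) * ratioDen c τ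
        + ratioNum m b c τ * (2*τ*(τ-c)*(τ-2*c) + τ^2*(τ-2*c) + τ^2*(τ-c)))
      - (τ-c) * (m*τ^2 - (τ-c)*(2*(m-1)*τ - b)) * ratioNum m b c τ * ratioDen c τ
      + -m*τ^2 * ratioDen c τ ^ 2
      = -2*b*c * τ^3*(τ-c)^4*(τ-2*c) := by
  unfold ratioNum ratioDen
  ring

end

/-- The identity `A·(p² − p′) − B·p + C = −2bc(τ−c)²/(τ(τ−2c))`
away from `{0, c, 2c}`. -/
theorem stmt_8 (m b c : ℝ)
    (p A B C : ℝ → ℝ)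
    (hpdef : ∀ τ, p τ =
      (-m*τ^3 + (2*(2*m-1)*c + b)*τ^2 - (2*(2*m-1)*c^2 + 3*b*c)*τ + 2*b*c^2)
        / (τ^2*(τ-c)*(τ-2*c)))
    (hAdef : ∀ τ, A τ = τ^2*(τ-c)^2)
    (hBdef : ∀ τ, B τ = (τ-c) * (m*τ^2 - (τ-c)*(2*(m-1)*τ - b)))
    (hCdef : ∀ τ, C τ = -m*τ^2) :
    ∀ τ : ℝ, τ ≠ 0 → τ ≠ c → τ ≠ 2*c →
      A τ * (p τ ^ 2 - deriv p τ) - B τ * p τ + C τ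
        = -2*b*c*(τ-c)^2 / (τ*(τ-2*c)) := by
  intro τ h0 hc h2c
  have hp : p = ratioNum m b c / ratioDen c := funext hpdef
  have hD0 := ratioDen_ne_zero c h0 hc h2c
  rw [hp, hAdef, hBdef, hCdef, riccati_div_eq (hasDerivAt_ratioNum m b c τ)
    (hasDerivAt_ratioDen c τ) hD0, riccati_numerator_factor]
  have h2 : τ - 2*c ≠ 0 := sub_ne_zero.mpr h2c
  rw [div_eq_div_iff (pow_ne_zero 2 hD0) (mul_ne_zero h0 h2), ratioDen]
  ring
end

section
/- Fix real constants b, c, κ, e with b·c ≠ 0, a sign ε ∈ {1, −1}, and an integer m ≥ 2. If φ : ℝ → ℝ is twice differentiable on a nonempty open interval I and satisfies both (E1) and (E2) at every point of I, then φ vanishes identically on I. In other words, the system {(E1),(E2)} has no nonzero solutions on any nonempty open interval when bc ≠ 0. -/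
/-!
The combination `-τ·(E1) - (τ-c)·(E2)` eliminates `φ''` and leaves a first-order relation
`P φ' + Q φ = R` with `P = -τ²(τ-c)(τ-2c)`. Differentiating it, eliminating `φ''` with (E1) and then
`φ'` with the relation itself, the inhomogeneous terms cancel and what remains is
`2bc τ(τ-c)³(τ-2c) φ = 0`. So `φ` vanishes on `I` off `{0, c, 2c}`, hence on all of `I` by continuity.
-/

open Filter Topology Polynomial

theorem eq_const_of_eq_const_off_finite {X Y : Type*} [TopologicalSpace X] [T1Space X]
    [∀ x : X, (𝓝[≠] x).NeBot] [TopologicalSpace Y] [T2Space Y] {U s : Set X} {f : X → Y} {a : Y}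
    (hU : IsOpen U) (hs : s.Finite) (hf : ∀ x ∈ U, ContinuousAt f x)
    (h : ∀ x ∈ U \ s, f x = a) : ∀ x ∈ U, f x = a := by
  intro x hx
  have hne : f =ᶠ[𝓝[≠] x] fun _ ↦ a :=
    mem_of_superset (nhdsNE_of_nhdsNE_sdiff_finite (mem_nhdsWithin_of_mem_nhds
      (hU.mem_nhds hx)) hs) h
  exact ((hf x hx).eventuallyEq_nhds_iff_eventuallyEq_nhdsNE continuousAt_const).1 hne |>.eq_of_nhds

namespace SolitonSystem

variable (b c M ε κ e : ℝ)

/-! Left-hand sides of (E1) and (E2) at a point `t` where `φ, φ', φ''` take the values `y, y₁, y₂`. -/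

def e1Lhs (t y y₁ y₂ : ℝ) : ℝ :=
  t^2 * (t-c)^2 * y₂ + (t-c) * (M*t^2 - (t-c)*(2*(M-1)*t - b)) * y₁ - M*t^2 * y

def e2Lhs (t y y₁ y₂ : ℝ) : ℝ :=
  -t^3*(t-c) * y₂ + ((2*M*t - b)*t*(t-c) - (M+1)*t^3) * y₁
    + (2*(2*M-1)*t^2 - b*t + 2*(t-c)*(b - (2*M-1)*t)) * y

/-! Coefficients of the first-order relation `P φ' + Q φ = R`. -/

noncomputable def coeffP : ℝ[X] := -(X^2 * (X - C c) * (X - C (2*c)))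

noncomputable def coeffQ : ℝ[X] := C M * X^3 - (X - C c) * (C (2*(2*M-1)*c + b) * X - C (2*b*c))

noncomputable def coeffR : ℝ[X] := C (ε*κ/2) * X^3 - C e * X * (X - C c)

variable {b c M ε κ e}

theorem first_order_relation {t y y₁ y₂ : ℝ}
    (h1 : e1Lhs b c M t y y₁ y₂ = -ε*κ*t^2/2) (h2 : e2Lhs b c M t y y₁ y₂ = e*t) :
    (coeffP c).eval t * y₁ + (coeffQ b c M).eval t * y = (coeffR c ε κ e).eval t := by
  simp only [e1Lhs, e2Lhs] at h1 h2
  simp only [coeffP, coeffQ, coeffR, eval_sub, eval_neg, eval_mul, eval_pow, eval_X, eval_C]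
  linear_combination (-t) * h1 - (t - c) * h2

theorem mul_eq_zero_of_derivative_relation {t y y₁ y₂ : ℝ}
    (h1 : e1Lhs b c M t y y₁ y₂ = -ε*κ*t^2/2) (h2 : e2Lhs b c M t y y₁ y₂ = e*t)
    (hD : (derivative (coeffP c)).eval t * y₁ + (coeffP c).eval t * y₂
      + ((derivative (coeffQ b c M)).eval t * y + (coeffQ b c M).eval t * y₁)
      = (derivative (coeffR c ε κ e)).eval t) :
    2*b*c*t*(t-c)^3*(t-2*c) * y = 0 := by
  -- `(t-2c)·h1 + (t-c)·hD` has no `y₂` term; `L` is its `y₁` coefficient, which the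
  -- first-order relation `-t·h1 - (t-c)·h2` then removes.
  set L := (t-2*c) * ((t-c) * (M*t^2 - (t-c)*(2*(M-1)*t - b)))
    + (t-c) * (-t*(2*(t-c)*(t-2*c) + t*(2*t-3*c))
      + (M*t^3 - (t-c)*((2*(2*M-1)*c + b)*t - 2*b*c)))
  simp only [e1Lhs, e2Lhs] at h1 h2
  simp only [coeffP, coeffQ, coeffR, derivative_mul, derivative_neg, derivative_sub,
    derivative_X_pow, derivative_X, derivative_C, eval_add, eval_sub, eval_neg, eval_mul, eval_pow,
    eval_X, eval_C, eval_zero, eval_one] at hD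
  linear_combination
    (-t^2*(t-c)*(t-2*c)*(t-2*c) + t*L) * h1 + (t-c)*L * h2 - t^2*(t-c)*(t-2*c)*(t-c) * hD

theorem mul_eq_zero_of_system {U : Set ℝ} (hU : IsOpen U) {φ : ℝ → ℝ}
    (hφ : ∀ t ∈ U, DifferentiableAt ℝ φ t) (hφ' : ∀ t ∈ U, DifferentiableAt ℝ (deriv φ) t)
    (h1 : ∀ t ∈ U, e1Lhs b c M t (φ t) (deriv φ t) (deriv (deriv φ) t) = -ε*κ*t^2/2)
    (h2 : ∀ t ∈ U, e2Lhs b c M t (φ t) (deriv φ t) (deriv (deriv φ) t) = e*t) :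
    ∀ t ∈ U, 2*b*c*t*(t-c)^3*(t-2*c) * φ t = 0 := by
  intro t ht
  have hrel : ∀ᶠ s in 𝓝 t, (coeffP c).eval s * deriv φ s + (coeffQ b c M).eval s * φ s
      = (coeffR c ε κ e).eval s :=
    eventually_of_mem (hU.mem_nhds ht) fun s hs ↦ first_order_relation (h1 s hs) (h2 s hs)
  have hderiv := (((coeffP c).hasDerivAt t).mul (hφ' t ht).hasDerivAt).add
    (((coeffQ b c M).hasDerivAt t).mul (hφ t ht).hasDerivAt)
  exact mul_eq_zero_of_derivative_relation (h1 t ht) (h2 t ht)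
    (hderiv.unique (((coeffR c ε κ e).hasDerivAt t).congr_of_eventuallyEq hrel))

end SolitonSystem

theorem stmt_9_general (b c κ e : ℝ) (hbc : b*c ≠ 0)
    (ε : ℝ)
    (m : ℤ)
    (I : Set ℝ) (hIopen : IsOpen I)
    (φ : ℝ → ℝ)
    (hφ : ∀ τ ∈ I, DifferentiableAt ℝ φ τ)
    (hφ' : ∀ τ ∈ I, DifferentiableAt ℝ (deriv φ) τ)
    (hE1 : ∀ τ ∈ I,
      τ^2 * (τ-c)^2 * deriv (deriv φ) τ
        + (τ-c) * ((m:ℝ)*τ^2 - (τ-c)*(2*((m:ℝ)-1)*τ - b)) * deriv φ τ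
        - (m:ℝ)*τ^2 * φ τ = -ε*κ*τ^2/2)
    (hE2 : ∀ τ ∈ I,
      -τ^3*(τ-c) * deriv (deriv φ) τ
        + ((2*(m:ℝ)*τ - b)*τ*(τ-c) - ((m:ℝ)+1)*τ^3) * deriv φ τ
        + (2*(2*(m:ℝ)-1)*τ^2 - b*τ + 2*(τ-c)*(b - (2*(m:ℝ)-1)*τ)) * φ τ = e*τ) :
    ∀ τ ∈ I, φ τ = 0 := by
  have hprod := SolitonSystem.mul_eq_zero_of_system hIopen hφ hφ' hE1 hE2
  refine eq_const_of_eq_const_off_finite hIopen (Set.toFinite {0, c, 2*c})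
    (fun τ hτ ↦ (hφ τ hτ).continuousAt) fun τ ⟨hτ, hτs⟩ ↦ ?_
  obtain ⟨hb, hc⟩ := mul_ne_zero_iff.1 hbc
  obtain ⟨h0, hc', h2c⟩ : τ ≠ 0 ∧ τ ≠ c ∧ τ ≠ 2*c := by simpa [not_or] using hτs
  refine (mul_eq_zero.1 (hprod τ hτ)).resolve_left ?_
  simp [hb, hc, h0, sub_ne_zero.2 hc', sub_ne_zero.2 h2c]

/-- If `bc ≠ 0`, the system {(E1),(E2)} has no nonzero solutions on
any nonempty open interval (the paper's Proposition 4.4). -/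
theorem stmt_9 (b c κ e : ℝ) (hbc : b*c ≠ 0)
    (ε : ℝ) (hε : ε = 1 ∨ ε = -1)
    (m : ℤ) (hm : 2 ≤ m)
    (I : Set ℝ) (hIopen : IsOpen I) (hIne : I.Nonempty) (hIconn : I.OrdConnected)
    (φ : ℝ → ℝ)
    (hφ : ∀ τ ∈ I, DifferentiableAt ℝ φ τ)
    (hφ' : ∀ τ ∈ I, DifferentiableAt ℝ (deriv φ) τ)
    (hE1 : ∀ τ ∈ I,
      τ^2 * (τ-c)^2 * deriv (deriv φ) τ
        + (τ-c) * ((m:ℝ)*τ^2 - (τ-c)*(2*((m:ℝ)-1)*τ - b)) * deriv φ τ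
        - (m:ℝ)*τ^2 * φ τ = -ε*κ*τ^2/2)
    (hE2 : ∀ τ ∈ I,
      -τ^3*(τ-c) * deriv (deriv φ) τ
        + ((2*(m:ℝ)*τ - b)*τ*(τ-c) - ((m:ℝ)+1)*τ^3) * deriv φ τ
        + (2*(2*(m:ℝ)-1)*τ^2 - b*τ + 2*(τ-c)*(b - (2*(m:ℝ)-1)*τ)) * φ τ = e*τ) :
    ∀ τ ∈ I, φ τ = 0 :=
  stmt_9_general b c κ e hbc ε m I hIopen φ hφ hφ' hE1 hE2
end

section
/- For every integer m ≥ 1 and every real b, the polynomial S(τ) = Σ_{l=0}^{m} (b^{m−l}/(m−l)!)·τ^l satisfies the homogeneous equation τ⁴S″(τ) + [(2−m)τ³ + bτ²]S′(τ) − mτ²S(τ) = 0 at every real τ. -/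
/-!
Write `S_m` for the polynomial. Splitting off its constant term gives
`S_{m+1} = τ S_m + b^{m+1}/(m+1)!`, and induction on `m` along this recursion yields the
first-order relation `τ² S_m' + (b - m τ) S_m = b^{m+1}/m!`. Its right-hand side is constant,
so differentiating it and multiplying by `τ²` gives the second-order equation.
-/

open Polynomial Finset

-- `X^m` times the degree-`m` Taylor polynomial of `exp` at `b / X`.
noncomputable def truncExpPoly {K : Type*} [Field K] (b : K) (m : ℕ) : K[X] :=
  ∑ l ∈ range (m + 1), C (b ^ (m - l) / ((m - l).factorial : K)) * X ^ l

section

variable {K : Type*} [Field K] (b : K)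

theorem eval_truncExpPoly (m : ℕ) (s : K) :
    (truncExpPoly b m).eval s =
      ∑ l ∈ range (m + 1), b ^ (m - l) / ((m - l).factorial : K) * s ^ l := by
  simp [truncExpPoly, eval_finsetSum]

theorem truncExpPoly_succ (m : ℕ) :
    truncExpPoly b (m + 1) = X * truncExpPoly b m + C (b ^ (m + 1) / ((m + 1).factorial : K)) := by
  rw [truncExpPoly, sum_range_succ', truncExpPoly, mul_sum]
  congr 1
  · refine sum_congr rfl fun l _ => ?_
    rw [Nat.add_sub_add_right, pow_succ]
    ring
  · simp

variable [CharZero K]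

theorem X_sq_mul_derivative_truncExpPoly_add (m : ℕ) :
    X ^ 2 * derivative (truncExpPoly b m) + (C b - (m : K[X]) * X) * truncExpPoly b m =
      C (b ^ (m + 1) / (m.factorial : K)) := by
  induction m with
  | zero => simp [truncExpPoly]
  | succ m ih =>
    set c := b ^ (m + 1) / ((m + 1).factorial : K)
    have hc : b ^ (m + 1) / (m.factorial : K) = (m + 1) * c := by
      simp only [c, Nat.factorial_succ]
      push_cast
      field_simp
    have hc' : b ^ (m + 1 + 1) / ((m + 1).factorial : K) = b * c := by
      simp only [c]; ring
    rw [hc, map_mul, map_add, map_natCast, map_one] at ih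
    rw [hc', map_mul, truncExpPoly_succ, derivative_add, derivative_mul, derivative_X,
      derivative_C]
    push_cast
    linear_combination X * ih

theorem truncExpPoly_ode (m : ℕ) :
    X ^ 4 * derivative (derivative (truncExpPoly b m)) +
        ((2 - (m : K[X])) * X ^ 3 + C b * X ^ 2) * derivative (truncExpPoly b m) -
      (m : K[X]) * X ^ 2 * truncExpPoly b m = 0 := by
  have h := congrArg derivative (X_sq_mul_derivative_truncExpPoly_add b m)
  simp only [derivative_add, derivative_mul, derivative_sub, derivative_X_sq, C_ofNat,
    derivative_C, derivative_natCast, derivative_X] at h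
  linear_combination X ^ 2 * h

end

theorem stmt_13_general (m : ℕ) (b : ℝ) (τ : ℝ) :
    τ^4 * deriv (deriv (fun s : ℝ =>
        ∑ l ∈ Finset.range (m+1), b^(m-l) / ((m-l).factorial : ℝ) * s^l)) τ
      + ((2-(m:ℝ))*τ^3 + b*τ^2) * deriv (fun s : ℝ =>
          ∑ l ∈ Finset.range (m+1), b^(m-l) / ((m-l).factorial : ℝ) * s^l) τ
      - (m:ℝ)*τ^2 *
          (∑ l ∈ Finset.range (m+1), b^(m-l) / ((m-l).factorial : ℝ) * τ^l) = 0 := by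
  have deriv_eval (p : ℝ[X]) : deriv (fun s => p.eval s) = fun s => p.derivative.eval s :=
    funext fun _ => p.deriv
  simp only [← eval_truncExpPoly, deriv_eval]
  simpa using congrArg (eval τ) (truncExpPoly_ode b m)

/-- The polynomial `S(τ) = Σ_{l=0}^{m} (b^{m−l}/(m−l)!)·τ^l` solves
the homogeneous version of (F1). -/
theorem stmt_13 (m : ℕ) (hm : 1 ≤ m) (b : ℝ) (τ : ℝ) :
    τ^4 * deriv (deriv (fun s : ℝ =>
        ∑ l ∈ Finset.range (m+1), b^(m-l) / ((m-l).factorial : ℝ) * s^l)) τ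
      + ((2-(m:ℝ))*τ^3 + b*τ^2) * deriv (fun s : ℝ =>
          ∑ l ∈ Finset.range (m+1), b^(m-l) / ((m-l).factorial : ℝ) * s^l) τ
      - (m:ℝ)*τ^2 *
          (∑ l ∈ Finset.range (m+1), b^(m-l) / ((m-l).factorial : ℝ) * τ^l) = 0 :=
  stmt_13_general m b τ
end

section
/- For every integer m ≥ 1 and every real b, the polynomial T(τ) = Σ_{l=1}^{m} (b^{m−l}/(m−l)!)·τ^l satisfies the homogeneous equation −τ⁴T″(τ) + [(m−1)τ³ − bτ²]T′(τ) + bτT(τ) = 0 at every real τ. -/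
/-!
On monomials the Euler operator `θ = τ d/dτ` acts by `θ τ^l = l τ^l`, so the left-hand side of
the equation applied to `Σ c_l τ^l` is `Σ (l (m - l) c_l τ^(l+2) - b (l - 1) c_l τ^(l+1))`.
For `c_l = b^(m-l)/(m-l)!` one has `(m - l) c_l = b c_(l+1)`, so the two sums agree term by term
after the shift `l ↦ l + 1`; the boundary terms `l = m` and `l = 1` vanish.
-/

open Finset

section PowerSum

variable (S : Finset ℕ) (a : ℕ → ℝ)

theorem hasDerivAt_sum_mul_pow (τ : ℝ) :
    HasDerivAt (fun s : ℝ => ∑ l ∈ S, a l * s ^ l) (∑ l ∈ S, a l * (l * τ ^ (l - 1))) τ :=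
  HasDerivAt.fun_sum fun l _ => (hasDerivAt_pow l τ).const_mul (a l)

theorem deriv_sum_mul_pow :
    deriv (fun s : ℝ => ∑ l ∈ S, a l * s ^ l) = fun τ => ∑ l ∈ S, a l * (l * τ ^ (l - 1)) :=
  funext fun τ => (hasDerivAt_sum_mul_pow S a τ).deriv

theorem mul_deriv_sum_mul_pow (τ : ℝ) :
    τ * deriv (fun s : ℝ => ∑ l ∈ S, a l * s ^ l) τ = ∑ l ∈ S, l * a l * τ ^ l := by
  rw [deriv_sum_mul_pow, mul_sum]
  refine sum_congr rfl fun l _ => ?_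
  rcases l with _ | l
  · simp
  · simp only [Nat.add_sub_cancel]
    ring

theorem sq_mul_deriv_deriv_sum_mul_pow (τ : ℝ) :
    τ ^ 2 * deriv (deriv (fun s : ℝ => ∑ l ∈ S, a l * s ^ l)) τ
      = ∑ l ∈ S, l * ((l : ℝ) - 1) * a l * τ ^ l := by
  rw [deriv_sum_mul_pow, (HasDerivAt.fun_sum fun l _ =>
    ((hasDerivAt_pow (l - 1) τ).const_mul (l : ℝ)).const_mul (a l)).deriv, mul_sum]
  refine sum_congr rfl fun l _ => ?_
  rcases l with _ | _ | l
  · simp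
  · simp
  · simp only [Nat.add_sub_cancel]
    push_cast
    ring

theorem ode_sum_mul_pow (m : ℕ) (b τ : ℝ) :
    -τ ^ 4 * deriv (deriv (fun s : ℝ => ∑ l ∈ S, a l * s ^ l)) τ
      + (((m : ℝ) - 1) * τ ^ 3 - b * τ ^ 2) * deriv (fun s : ℝ => ∑ l ∈ S, a l * s ^ l) τ
      + b * τ * ∑ l ∈ S, a l * τ ^ l
      = ∑ l ∈ S, (l * ((m : ℝ) - l) * a l * τ ^ (l + 2) - b * ((l : ℝ) - 1) * a l * τ ^ (l + 1)) := by
  have h₁ := mul_deriv_sum_mul_pow S a τ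
  have h₂ := sq_mul_deriv_deriv_sum_mul_pow S a τ
  calc _ = -τ ^ 2 * (τ ^ 2 * deriv (deriv (fun s : ℝ => ∑ l ∈ S, a l * s ^ l)) τ)
          + (((m : ℝ) - 1) * τ ^ 2 - b * τ) * (τ * deriv (fun s : ℝ => ∑ l ∈ S, a l * s ^ l) τ)
          + b * τ * ∑ l ∈ S, a l * τ ^ l := by ring
    _ = _ := by
      rw [h₁, h₂, mul_sum, mul_sum, mul_sum, ← sum_add_distrib, ← sum_add_distrib]
      exact sum_congr rfl fun l _ => by ring

end PowerSum

noncomputable def expCoeff (m : ℕ) (b : ℝ) (l : ℕ) : ℝ := b ^ (m - l) / ((m - l).factorial : ℝ)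

theorem sub_mul_expCoeff {m l : ℕ} (hl : l < m) (b : ℝ) :
    ((m : ℝ) - l) * expCoeff m b l = b * expCoeff m b (l + 1) := by
  obtain ⟨k, hk⟩ : ∃ k, m - l = k + 1 := ⟨m - l - 1, by omega⟩
  have hcast : (m : ℝ) - l = k + 1 := by
    rw [← Nat.cast_sub hl.le, hk]
    push_cast
    ring
  rw [expCoeff, expCoeff, hcast, hk, show m - (l + 1) = k by omega, Nat.factorial_succ, pow_succ]
  push_cast
  field_simp

theorem sum_Icc_expCoeff_telescope (m : ℕ) (b τ : ℝ) :
    ∑ l ∈ Icc 1 m, (l * ((m : ℝ) - l) * expCoeff m b l * τ ^ (l + 2)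
      - b * ((l : ℝ) - 1) * expCoeff m b l * τ ^ (l + 1)) = 0 := by
  rw [sum_sub_distrib, sub_eq_zero]
  rcases m with _ | n
  · simp
  rw [← Ico_add_one_right_eq_Icc, sum_Ico_eq_sum_range, sum_Ico_eq_sum_range,
    show n + 1 + 1 - 1 = n + 1 by rfl, sum_range_succ, sum_range_succ']
  simp only [add_zero, Nat.cast_add, Nat.cast_one, sub_self, mul_zero, zero_mul, add_comm 1 n]
  refine sum_congr rfl fun k hk => ?_
  have hrec := sub_mul_expCoeff (m := n + 1) (l := 1 + k) (by simp at hk; omega) b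
  rw [← add_assoc 1 k 1]
  push_cast at hrec ⊢
  linear_combination ((1 : ℝ) + k) * τ ^ (1 + k + 2) * hrec

theorem stmt_14_general (m : ℕ) (b : ℝ) (τ : ℝ) :
    -τ^4 * deriv (deriv (fun s : ℝ =>
        ∑ l ∈ Finset.Icc 1 m, b^(m-l) / ((m-l).factorial : ℝ) * s^l)) τ
      + (((m:ℝ)-1)*τ^3 - b*τ^2) * deriv (fun s : ℝ =>
          ∑ l ∈ Finset.Icc 1 m, b^(m-l) / ((m-l).factorial : ℝ) * s^l) τ
      + b*τ *
          (∑ l ∈ Finset.Icc 1 m, b^(m-l) / ((m-l).factorial : ℝ) * τ^l) = 0 :=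
  (ode_sum_mul_pow (Icc 1 m) (expCoeff m b) m b τ).trans (sum_Icc_expCoeff_telescope m b τ)

/-- The polynomial `T(τ) = Σ_{l=1}^{m} (b^{m−l}/(m−l)!)·τ^l` solves
the homogeneous version of (F2). -/
theorem stmt_14 (m : ℕ) (hm : 1 ≤ m) (b : ℝ) (τ : ℝ) :
    -τ^4 * deriv (deriv (fun s : ℝ =>
        ∑ l ∈ Finset.Icc 1 m, b^(m-l) / ((m-l).factorial : ℝ) * s^l)) τ
      + (((m:ℝ)-1)*τ^3 - b*τ^2) * deriv (fun s : ℝ =>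
          ∑ l ∈ Finset.Icc 1 m, b^(m-l) / ((m-l).factorial : ℝ) * s^l) τ
      + b*τ *
          (∑ l ∈ Finset.Icc 1 m, b^(m-l) / ((m-l).factorial : ℝ) * τ^l) = 0 :=
  stmt_14_general m b τ
end

section
/- Fix an integer m ≥ 1 and a real b ≠ 0. Let I ⊆ ℝ be a nonempty open interval with 0 ∉ I, and let φ : I → ℝ be twice differentiable and satisfy −τ⁴φ″(τ) + [(m−1)τ³ − bτ²]φ′(τ) + bτφ(τ) = 0 at every τ ∈ I. Then there exist real constants β₁, β₂ such that φ(τ) = β₁·τ^m·exp(b/τ) + β₂·Σ_{l=1}^{m} (b^{m−l}/(m−l)!)·τ^l for all τ ∈ I. -/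
/-!
In normal form the equation reads `φ'' = p φ' + q φ` with `p = (m - 1)/τ - b/τ²` and
`q = b/τ³`. Both `y₁ = τ^m exp(b/τ)` and the polynomial `P = Σ b^(m-l) τ^l / (m-l)!` solve it.
For `P` this comes from the first-order identity `τ² P' - (mτ - b) P = b^m τ / (m-1)!`, proved
by induction on `m` from `P_(m+1) = τ P_m + b^m τ / m!`, and then differentiated. The same
identity gives the Wronskian `W(y₁, P) = b^m/(m-1)! · τ^(m-1) exp(b/τ)`, which vanishes nowhere
when `b ≠ 0`. By Abel's identity every Wronskian of two solutions satisfies `W' = p W`, so on the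
interval `W(φ, P)` and `W(y₁, φ)` are constant multiples of `W(y₁, P)`, and Cramer's rule
`φ W(y₁, P) = y₁ W(φ, P) + P W(y₁, φ)` writes `φ` as a combination of `y₁` and `P`.
-/

open Finset

def IsSolutionOn (p q : ℝ → ℝ) (s : Set ℝ) (y dy : ℝ → ℝ) : Prop :=
  ∀ t ∈ s, HasDerivAt y (dy t) t ∧ HasDerivAt dy (p t * dy t + q t * y t) t

def wronskian (y dy z dz : ℝ → ℝ) (t : ℝ) : ℝ := y t * dz t - dy t * z t

namespace IsSolutionOn

variable {p q y dy z dz : ℝ → ℝ} {s : Set ℝ}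

theorem mono {s' : Set ℝ} (h : IsSolutionOn p q s y dy) (hs : s' ⊆ s) :
    IsSolutionOn p q s' y dy :=
  fun t ht => h t (hs ht)

theorem hasDerivAt_wronskian (hy : IsSolutionOn p q s y dy) (hz : IsSolutionOn p q s z dz)
    {t : ℝ} (ht : t ∈ s) :
    HasDerivAt (wronskian y dy z dz) (p t * wronskian y dy z dz t) t := by
  obtain ⟨hy, hdy⟩ := hy t ht
  obtain ⟨hz, hdz⟩ := hz t ht
  exact ((hy.fun_mul hdz).fun_sub (hdy.fun_mul hz)).congr_deriv (by rw [wronskian]; ring)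

end IsSolutionOn

theorem IsOpen.exists_eq_const_mul_of_hasDerivAt {p f g : ℝ → ℝ} {s : Set ℝ} (hs : IsOpen s)
    (hs' : IsPreconnected s) (hf : ∀ t ∈ s, HasDerivAt f (p t * f t) t)
    (hg : ∀ t ∈ s, HasDerivAt g (p t * g t) t) (hg₀ : ∀ t ∈ s, g t ≠ 0) :
    ∃ c, ∀ t ∈ s, f t = c * g t := by
  have hquot : ∀ t ∈ s, HasDerivAt (fun t => f t / g t) 0 t := fun t ht =>
    ((hf t ht).div (hg t ht) (hg₀ t ht)).congr_deriv (by ring)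
  obtain ⟨c, hc⟩ := hs.exists_is_const_of_deriv_eq_zero hs'
    (fun t ht => (hquot t ht).differentiableAt.differentiableWithinAt)
    (fun t ht => (hquot t ht).deriv)
  exact ⟨c, fun t ht => by rw [← hc t ht, div_mul_cancel₀ _ (hg₀ t ht)]⟩

theorem IsSolutionOn.exists_eq_add {p q y₁ dy₁ y₂ dy₂ φ dφ : ℝ → ℝ} {s : Set ℝ}
    (hs : IsOpen s) (hs' : IsPreconnected s)
    (h₁ : IsSolutionOn p q s y₁ dy₁) (h₂ : IsSolutionOn p q s y₂ dy₂)
    (hW : ∀ t ∈ s, wronskian y₁ dy₁ y₂ dy₂ t ≠ 0) (hφ : IsSolutionOn p q s φ dφ) :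
    ∃ β₁ β₂ : ℝ, ∀ t ∈ s, φ t = β₁ * y₁ t + β₂ * y₂ t := by
  have hW₁₂ := fun t (ht : t ∈ s) => h₁.hasDerivAt_wronskian h₂ ht
  obtain ⟨β₁, hβ₁⟩ := hs.exists_eq_const_mul_of_hasDerivAt hs'
    (fun t ht => hφ.hasDerivAt_wronskian h₂ ht) hW₁₂ hW
  obtain ⟨β₂, hβ₂⟩ := hs.exists_eq_const_mul_of_hasDerivAt hs'
    (fun t ht => h₁.hasDerivAt_wronskian hφ ht) hW₁₂ hW
  refine ⟨β₁, β₂, fun t ht => mul_right_cancel₀ (hW t ht) ?_⟩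
  have e₁ := hβ₁ t ht
  have e₂ := hβ₂ t ht
  simp only [wronskian] at e₁ e₂ ⊢
  -- Cramer's rule: `φ W(y₁, y₂) = y₁ W(φ, y₂) + y₂ W(y₁, φ)`
  linear_combination y₁ t * e₁ + y₂ t * e₂

noncomputable def odeP (m : ℕ) (b t : ℝ) : ℝ := ((m : ℝ) - 1) / t - b / t ^ 2

noncomputable def odeQ (b t : ℝ) : ℝ := b / t ^ 3

noncomputable def expSol (m : ℕ) (b t : ℝ) : ℝ := t ^ m * Real.exp (b / t)

noncomputable def polySol (m : ℕ) (b t : ℝ) : ℝ :=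
  ∑ l ∈ Icc 1 m, b ^ (m - l) / ((m - l).factorial : ℝ) * t ^ l

section

variable (m : ℕ) (b : ℝ)

theorem hasDerivAt_expSol {t : ℝ} (ht : t ≠ 0) :
    HasDerivAt (expSol m b) ((m / t - b / t ^ 2) * expSol m b t) t := by
  have hexp : HasDerivAt (fun t => b / t) (-b / t ^ 2) t := by
    simpa [div_eq_mul_inv, neg_div] using (hasDerivAt_inv ht).const_mul b
  refine ((hasDerivAt_pow m t).fun_mul hexp.exp).congr_deriv ?_
  rcases m with _ | k
  · simp [expSol]
    ring
  · simp only [expSol, Nat.add_sub_cancel, pow_succ]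
    field_simp
    push_cast
    ring

theorem isSolutionOn_expSol :
    IsSolutionOn (odeP m b) (odeQ b) {t | t ≠ 0} (expSol m b)
      (fun t => (m / t - b / t ^ 2) * expSol m b t) := by
  intro t (ht : t ≠ 0)
  refine ⟨hasDerivAt_expSol m b ht, ?_⟩
  have hcoeff : HasDerivAt (fun t => (m : ℝ) / t - b / t ^ 2) (-m / t ^ 2 + 2 * b / t ^ 3) t := by
    have h := ((hasDerivAt_inv ht).const_mul (m : ℝ)).fun_sub
      (((hasDerivAt_pow 2 t).inv (pow_ne_zero 2 ht)).const_mul b)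
    refine (h.congr_deriv ?_).congr_of_eventuallyEq ?_
    · field_simp
      ring
    · exact Filter.Eventually.of_forall fun x => by simp [div_eq_mul_inv]
  refine (hcoeff.fun_mul (hasDerivAt_expSol m b ht)).congr_deriv ?_
  simp only [odeP, odeQ]
  field_simp
  ring

theorem contDiff_polySol {n : WithTop ℕ∞} : ContDiff ℝ n (polySol m b) := by
  unfold polySol
  fun_prop

theorem differentiable_polySol : Differentiable ℝ (polySol m b) := by
  unfold polySol
  fun_prop

theorem polySol_add_two (k : ℕ) (t : ℝ) :
    polySol (k + 2) b t
      = t * polySol (k + 1) b t + b ^ (k + 1) / ((k + 1).factorial : ℝ) * t := by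
  have hIoc : Ioc 1 (k + 2) = (Icc 1 (k + 1)).map (addRightEmbedding 1) := by
    rw [map_add_right_Icc]
    ext
    simp only [mem_Ioc, mem_Icc]
    omega
  rw [polySol, Icc_eq_cons_Ioc (by omega), sum_cons, hIoc, sum_map, polySol, mul_sum, add_comm]
  congr 1
  · refine sum_congr rfl fun l _ => ?_
    rw [addRightEmbedding_apply, show k + 2 - (l + 1) = k + 1 - l by omega]
    ring
  · simp

end

theorem sq_mul_deriv_polySol {m : ℕ} (hm : 1 ≤ m) (b t : ℝ) :
    t ^ 2 * deriv (polySol m b) t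
      = (m * t - b) * polySol m b t + b ^ m / ((m - 1).factorial : ℝ) * t := by
  obtain ⟨k, rfl⟩ : ∃ k, m = k + 1 := ⟨m - 1, by omega⟩
  clear hm
  simp only [Nat.add_sub_cancel]
  induction k generalizing t with
  | zero =>
    have hP₁ : polySol 1 b = id := by ext; simp [polySol]
    simp [hP₁]
    ring
  | succ k ih =>
    set c : ℝ := b ^ (k + 1) / ((k + 1).factorial : ℝ)
    have hderiv : HasDerivAt (polySol (k + 2) b)
        (polySol (k + 1) b t + t * deriv (polySol (k + 1) b) t + c) t := by
      rw [show polySol (k + 2) b = fun t => t * polySol (k + 1) b t + c * t from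
        funext (polySol_add_two b k)]
      have hP := (differentiable_polySol (k + 1) b t).hasDerivAt
      simpa using ((hasDerivAt_id' t).fun_mul hP).fun_add ((hasDerivAt_id' t).const_mul c)
    rw [hderiv.deriv, polySol_add_two]
    have hc : b ^ (k + 1) / (k.factorial : ℝ) = (k + 1) * c := by
      simp only [c, Nat.factorial_succ]
      push_cast
      field_simp
    rw [hc] at ih
    push_cast at ih ⊢
    linear_combination t * ih t

theorem isSolutionOn_polySol {m : ℕ} (hm : 1 ≤ m) (b : ℝ) :
    IsSolutionOn (odeP m b) (odeQ b) {t | t ≠ 0} (polySol m b) (deriv (polySol m b)) := by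
  intro t (ht : t ≠ 0)
  refine ⟨(differentiable_polySol m b t).hasDerivAt, ?_⟩
  have hdiff := (contDiff_polySol m b).differentiable_deriv_two
  have hid : HasDerivAt (fun t => t ^ 2 * deriv (polySol m b) t)
      (m * polySol m b t + (m * t - b) * deriv (polySol m b) t
        + b ^ m / ((m - 1).factorial : ℝ)) t := by
    rw [funext (sq_mul_deriv_polySol hm b)]
    have hlin := ((hasDerivAt_id' t).const_mul (m : ℝ)).sub_const b
    refine ((hlin.fun_mul (differentiable_polySol m b t).hasDerivAt).fun_add
      ((hasDerivAt_id' t).const_mul _)).congr_deriv ?_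
    ring
  have h₂ := ((hasDerivAt_pow 2 t).fun_mul (hdiff t).hasDerivAt).unique hid
  refine (hdiff t).hasDerivAt.congr_deriv ?_
  have h₁ := sq_mul_deriv_polySol hm b t
  simp only [odeP, odeQ]
  field_simp
  push_cast at h₂
  linear_combination t * h₂ - h₁

theorem wronskian_expSol_polySol {m : ℕ} (hm : 1 ≤ m) (b : ℝ) {t : ℝ} (ht : t ≠ 0) :
    wronskian (expSol m b) (fun t => (m / t - b / t ^ 2) * expSol m b t)
      (polySol m b) (deriv (polySol m b)) t
      = b ^ m / ((m - 1).factorial : ℝ) * expSol m b t / t := by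
  have h := sq_mul_deriv_polySol hm b t
  generalize b ^ m / ((m - 1).factorial : ℝ) = c at h ⊢
  simp only [wronskian]
  field_simp
  linear_combination expSol m b t * h

theorem stmt_17_general (m : ℕ) (hm : 1 ≤ m) (b : ℝ) (hb : b ≠ 0)
    (I : Set ℝ) (hIopen : IsOpen I) (hIconn : I.OrdConnected)
    (h0 : (0:ℝ) ∉ I)
    (φ : ℝ → ℝ)
    (hφ : ∀ τ ∈ I, DifferentiableAt ℝ φ τ)
    (hφ' : ∀ τ ∈ I, DifferentiableAt ℝ (deriv φ) τ)
    (hode : ∀ τ ∈ I,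
      -τ^4 * deriv (deriv φ) τ + (((m:ℝ)-1)*τ^3 - b*τ^2) * deriv φ τ
        + b*τ * φ τ = 0) :
    ∃ β₁ β₂ : ℝ, ∀ τ ∈ I,
      φ τ = β₁ * (τ^m * Real.exp (b/τ))
        + β₂ * ∑ l ∈ Finset.Icc 1 m, b^(m-l) / ((m-l).factorial : ℝ) * τ^l := by
  have hI : I ⊆ {t | t ≠ 0} := fun t ht h => h0 (h ▸ ht)
  have hφsol : IsSolutionOn (odeP m b) (odeQ b) I φ (deriv φ) := fun t ht => by
    refine ⟨(hφ t ht).hasDerivAt, (hφ' t ht).hasDerivAt.congr_deriv ?_⟩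
    have ht₀ : t ≠ 0 := hI ht
    simp only [odeP, odeQ]
    field_simp
    refine mul_left_cancel₀ ht₀ ?_
    linear_combination -hode t ht
  have hW : ∀ t ∈ I, wronskian (expSol m b) (fun t => (m / t - b / t ^ 2) * expSol m b t)
      (polySol m b) (deriv (polySol m b)) t ≠ 0 := fun t ht => by
    have ht₀ : t ≠ 0 := hI ht
    rw [wronskian_expSol_polySol hm b ht₀, expSol]
    positivity
  exact ((isSolutionOn_expSol m b).mono hI).exists_eq_add hIopen hIconn.isPreconnected
    ((isSolutionOn_polySol hm b).mono hI) hW hφsol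

/-- Every solution of the homogeneous version of (F2) on a nonempty
open interval avoiding `0` is a linear combination of `τ^m·exp(b/τ)` and
`Σ_{l=1}^{m} (b^{m−l}/(m−l)!)·τ^l`. -/
theorem stmt_17 (m : ℕ) (hm : 1 ≤ m) (b : ℝ) (hb : b ≠ 0)
    (I : Set ℝ) (hIopen : IsOpen I) (hIne : I.Nonempty) (hIconn : I.OrdConnected)
    (h0 : (0:ℝ) ∉ I)
    (φ : ℝ → ℝ)
    (hφ : ∀ τ ∈ I, DifferentiableAt ℝ φ τ)
    (hφ' : ∀ τ ∈ I, DifferentiableAt ℝ (deriv φ) τ)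
    (hode : ∀ τ ∈ I,
      -τ^4 * deriv (deriv φ) τ + (((m:ℝ)-1)*τ^3 - b*τ^2) * deriv φ τ
        + b*τ * φ τ = 0) :
    ∃ β₁ β₂ : ℝ, ∀ τ ∈ I,
      φ τ = β₁ * (τ^m * Real.exp (b/τ))
        + β₂ * ∑ l ∈ Finset.Icc 1 m, b^(m-l) / ((m-l).factorial : ℝ) * τ^l :=
  stmt_17_general m hm b hb I hIopen hIconn h0 φ hφ hφ' hode
end
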